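/- For Class 2 paths (steps (1,1) weight 1 length 1; (i,0) weight b_i length i for i∈B; (i,-1) weight a_i length i for i∈A): for all 0 ≤ m ≤ n, the total weight of pointed paths from (0,0) to the line y=1 with length n+1, non-positive pointed length m, and last step of length ≥ 1, equals the total weight f_n of nonnegative paths of length n. -/

import Mathlib

/-- Abstract steps: `up` is `(1,1)`, `flat i` is `(i,0)` and `down i` is `(i,-1)`. -/
inductive Step where
  | up : Step
  | flat : ℕ → Step
  | down : ℕ → Step

/-- Height change of a step. -/
def dh : Step → ℤ
  | .up => 1
  | .flat _ => 0
  | .down _ => -1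

/-- Length of a step (Class 2). -/
def len : Step → ℕ
  | .up => 1
  | .flat i => i
  | .down i => i

/-- A step is allowed: flat steps are indexed by `B`, down steps by `A`. -/
def Valid (A B : Finset ℕ) : Step → Prop
  | .up => True
  | .flat i => i ∈ B
  | .down i => i ∈ A

/-- Weight of a step. -/
def wt {R : Type*} [CommRing R] (a b : ℕ → R) : Step → R
  | .up => 1
  | .flat i => b i
  | .down i => a i

/-- Weight of a path. -/
def pathWt {R : Type*} [CommRing R] (a b : ℕ → R) (L : List Step) : R :=
  (L.map (wt a b)).prod

/-- Length of a path. -/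
def pathLen (L : List Step) : ℕ := (L.map len).sum

/-- A nonnegative path: ends on the x-axis and never goes below it. -/
def Nonneg (L : List Step) : Prop :=
  (L.map dh).sum = 0 ∧ ∀ h ∈ (L.map dh).scanl (· + ·) 0, 0 ≤ h

/-- The non-positive length `\bar l(L)`: the sum of the lengths of the steps of `L`
whose ending height is `≤ 0`. -/
def npLen (L : List Step) : ℕ :=
  (((L.zip (((L.map dh).scanl (· + ·) 0).tail)).filter
    (fun p => decide (p.2 ≤ 0))).map (fun p => len p.1)).sum

/-!
A path `L` ending at height `1` has exactly one rotation of the form `up :: P` with `P`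
nonnegative (cycle lemma): cut `L` at the last minimum of its heights. Conversely, let
`W = up :: P` and order the steps of `W` by their end height, later steps first among equal
heights. The rotation of `W` ending with step `i` has non-positive length equal to the total length
of the steps preceding `i` in this order. Hence, as `i` runs over the steps of `W` and the mark `j`
over `0, …, len i - 1`, the pointed length takes each value `0, …, n` exactly once: each
nonnegative path of length `n` has exactly one pointed preimage of pointed length `m`.
-/

namespace ChungFeller

open Finset

lemma exists_eq_append_of_le_length {α : Type*} {W : List α} {n : ℕ} (hn : n ≤ W.length) :
    ∃ X Y, W = X ++ Y ∧ X.length = n :=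
  ⟨W.take n, W.drop n, (List.take_append_drop n W).symm, List.length_take_of_le hn⟩

def height (W : List Step) (t : ℕ) : ℤ := ((W.take t).map dh).sum

@[simp] lemma height_zero (W : List Step) : height W 0 = 0 := by simp [height]

lemma height_length (W : List Step) : height W W.length = (W.map dh).sum := by
  simp [height]

lemma height_cons_succ (s : Step) (W : List Step) (t : ℕ) :
    height (s :: W) (t + 1) = dh s + height W t := by
  simp [height]

lemma height_append_of_le {X : List Step} {t : ℕ} (Y : List Step) (ht : t ≤ X.length) :
    height (X ++ Y) t = height X t := by
  simp [height, List.take_append, Nat.sub_eq_zero_of_le ht]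

lemma height_append_add (X Y : List Step) (t : ℕ) :
    height (X ++ Y) (X.length + t) = (X.map dh).sum + height Y t := by
  simp [height, List.take_append, List.take_of_length_le (Nat.le_add_right _ _)]

lemma nonneg_iff (P : List Step) :
    Nonneg P ↔ (P.map dh).sum = 0 ∧ ∀ t ≤ P.length, 0 ≤ height P t := by
  have hscan (h : ℤ) :
      h ∈ (P.map dh).scanl (· + ·) 0 ↔ ∃ t ≤ P.length, height P t = h := by
    simp only [List.mem_iff_getElem, List.getElem_scanl, List.length_scanl, List.length_map,
      Nat.lt_succ_iff, ← List.sum_eq_foldl, height, List.map_take, exists_prop]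
  simp only [Nonneg, hscan]
  grind

def stepLen (W : List Step) (k : ℕ) : ℕ := len (W.getD k .up)

@[simp] lemma stepLen_cons_zero (s : Step) (W : List Step) : stepLen (s :: W) 0 = len s := rfl

@[simp] lemma stepLen_cons_succ (s : Step) (W : List Step) (k : ℕ) :
    stepLen (s :: W) (k + 1) = stepLen W k := rfl

lemma sum_stepLen (W : List Step) : ∑ k ∈ range W.length, stepLen W k = pathLen W := by
  induction W with
  | nil => rfl
  | cons s T ih =>
    rw [List.length_cons, sum_range_succ']
    simp only [stepLen_cons_succ, stepLen_cons_zero, ih]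
    rw [pathLen, pathLen, List.map_cons, List.sum_cons, add_comm]

lemma npLen_eq_sum (L : List Step) :
    npLen L = ∑ k ∈ range L.length, if height L (k + 1) ≤ 0 then stepLen L k else 0 := by
  suffices ∀ c : ℤ, (((L.zip ((L.map dh).scanl (· + ·) c).tail).filter
      (fun p => decide (p.2 ≤ 0))).map (fun p => len p.1)).sum
      = ∑ k ∈ range L.length, if c + height L (k + 1) ≤ 0 then stepLen L k else 0 by
    simpa [npLen] using this 0
  induction L with
  | nil => simp
  | cons s T ih =>
    intro c
    rw [List.length_cons, sum_range_succ']
    have hscan : ((T.map dh).scanl (· + ·) (c + dh s)) =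
        (c + dh s) :: ((T.map dh).scanl (· + ·) (c + dh s)).tail := by
      cases T <;> simp
    simp only [List.map_cons, List.scanl_cons, List.tail_cons]
    rw [hscan, List.zip_cons_cons, List.filter_cons]
    simp only [height_cons_succ, height_zero, stepLen_cons_succ, stepLen_cons_zero, ← add_assoc,
      ← ih]
    by_cases h : c + dh s ≤ 0 <;> simp [h, add_comm]

section Ranking

variable {ι β : Type*} [LinearOrder β] (s : Finset ι) (key : ι → β) (ℓ : ι → ℕ)

/-- Blocks of sizes `ℓ i` laid end to end in the order of `key`: block `i` starts here. -/
def offset (i : ι) : ℕ := ∑ k ∈ s with key k < key i, ℓ k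

variable {s key ℓ}

lemma offset_add_le_of_subset {i : ι} {t : Finset ι} (hi : i ∈ t)
    (hsub : {k ∈ s | key k < key i} ⊆ t) :
    offset s key ℓ i + ℓ i ≤ ∑ k ∈ t, ℓ k := by
  have hi' : i ∉ {k ∈ s | key k < key i} := by simp
  rw [offset, add_comm, ← sum_cons hi']
  exact sum_le_sum_of_subset (cons_subset.2 ⟨hi, hsub⟩)

lemma offset_add_le_offset {i i' : ι} (hi : i ∈ s) (h : key i < key i') :
    offset s key ℓ i + ℓ i ≤ offset s key ℓ i' :=
  offset_add_le_of_subset (by simp [hi, h]) fun k hk => by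
    simp only [mem_filter] at hk ⊢
    exact ⟨hk.1, hk.2.trans h⟩

lemma offset_add_lt_sum {i : ι} {j : ℕ} (hi : i ∈ s) (hj : j < ℓ i) :
    offset s key ℓ i + j < ∑ k ∈ s, ℓ k :=
  (Nat.add_lt_add_left hj _).trans_le (offset_add_le_of_subset hi (filter_subset _ _))

lemma injOn_offset_add (hkey : Set.InjOn key s) :
    Set.InjOn (fun p : ι × ℕ => offset s key ℓ p.1 + p.2)
      {p | p.1 ∈ s ∧ p.2 < ℓ p.1} := by
  rintro ⟨i, j⟩ ⟨hi, hj⟩ ⟨i', j'⟩ ⟨hi', hj'⟩ h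
  dsimp only at h hi hj hi' hj'
  rcases lt_trichotomy (key i) (key i') with hlt | heq | hgt
  · have := offset_add_le_offset (ℓ := ℓ) hi hlt
    omega
  · obtain rfl := hkey hi hi' heq
    simp_all
  · have := offset_add_le_offset (ℓ := ℓ) hi' hgt
    omega

lemma surjOn_offset_add (hkey : Set.InjOn key s) :
    Set.SurjOn (fun p : ι × ℕ => offset s key ℓ p.1 + p.2) {p | p.1 ∈ s ∧ p.2 < ℓ p.1}
      (Set.Iio (∑ k ∈ s, ℓ k)) := by
  set cells := (s.sigma fun i => range (ℓ i)).map (Equiv.sigmaEquivProd ι ℕ).toEmbedding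
  have mem_cells : ∀ p, p ∈ cells ↔ p.1 ∈ s ∧ p.2 < ℓ p.1 := by
    simp [cells]
  intro m hm
  obtain ⟨p, hp, rfl⟩ := surj_on_of_inj_on_of_card_le
    (s := cells) (t := range (∑ k ∈ s, ℓ k)) (fun p _ => offset s key ℓ p.1 + p.2)
    (fun p hp => mem_range.2 (offset_add_lt_sum ((mem_cells p).1 hp).1 ((mem_cells p).1 hp).2))
    (fun p p' hp hp' h => injOn_offset_add hkey ((mem_cells p).1 hp) ((mem_cells p').1 hp') h)
    (by simp [cells, card_sigma]) m (mem_range.2 hm)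
  exact ⟨p, (mem_cells p).1 hp, rfl⟩

end Ranking

def rankKey (W : List Step) (k : ℕ) : ℤ ×ₗ ℤ := toLex (height W (k + 1), -(k : ℤ))

lemma rankKey_lt_iff {W : List Step} {k i : ℕ} :
    rankKey W k < rankKey W i ↔
      height W (k + 1) < height W (i + 1) ∨ height W (k + 1) = height W (i + 1) ∧ i < k := by
  simp [rankKey, Prod.Lex.toLex_lt_toLex]

lemma injOn_rankKey (W : List Step) : Set.InjOn (rankKey W) (range W.length) := by
  intro k _ i _ h
  simpa [rankKey] using congrArg (fun p => (ofLex p).2) h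

lemma npLen_rotate {W : List Step} (hW : (W.map dh).sum = 1) {i : ℕ} (hi : i < W.length) :
    npLen (W.rotate (i + 1)) = offset (range W.length) (rankKey W) (stepLen W) i := by
  obtain ⟨X, Y, rfl, hX⟩ := exists_eq_append_of_le_length hi
  have hXY : (X.map dh).sum + (Y.map dh).sum = 1 := by simpa using hW
  have hXi : height (X ++ Y) (i + 1) = (X.map dh).sum := by
    rw [height_append_of_le _ hX.ge, ← hX, height_length]
  rw [List.rotate_eq_drop_append_take hi, List.drop_left' hX, List.take_left' hX,
    npLen_eq_sum, offset, sum_filter, List.length_append, List.length_append, sum_range_add,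
    sum_range_add, add_comm]
  congr 1 <;> refine sum_congr rfl fun k hk => ?_ <;> rw [mem_range] at hk
  · have hcond : height (Y ++ X) (Y.length + k + 1) ≤ 0 ↔
        rankKey (X ++ Y) k < rankKey (X ++ Y) i := by
      rw [add_assoc, height_append_add, rankKey_lt_iff, hXi, height_append_of_le _ (by omega)]
      omega
    have hstep : (Y ++ X).getD (Y.length + k) .up = (X ++ Y).getD k .up := by
      rw [List.getD_append_right _ _ _ _ (by omega), List.getD_append _ _ _ _ hk,
        Nat.add_sub_cancel_left]
    simp only [hcond, hstep, stepLen]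
  · have hcond : height (Y ++ X) (k + 1) ≤ 0 ↔
        rankKey (X ++ Y) (X.length + k) < rankKey (X ++ Y) i := by
      rw [height_append_of_le _ (by omega), rankKey_lt_iff, hXi, add_assoc, height_append_add]
      omega
    have hstep : (Y ++ X).getD k .up = (X ++ Y).getD (X.length + k) .up := by
      rw [List.getD_append _ _ _ _ hk, List.getD_append_right _ _ _ _ (by omega),
        Nat.add_sub_cancel_left]
    simp only [hcond, hstep, stepLen]

def IsLastMin (L : List Step) (k : ℕ) : Prop :=
  k ≤ L.length ∧
    ∀ t ≤ L.length, height L k ≤ height L t ∧ (k < t → height L k < height L t)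

lemma exists_isLastMin (L : List Step) : ∃ k, IsLastMin L k := by
  obtain ⟨k, hk, hmin⟩ := (range (L.length + 1)).exists_min_image
    (fun t => toLex (height L t, -(t : ℤ))) ⟨0, by simp⟩
  refine ⟨k, Nat.lt_succ_iff.1 (mem_range.1 hk), fun t ht => ?_⟩
  have := hmin t (mem_range.2 (Nat.lt_succ_of_le ht))
  simp only [Prod.Lex.toLex_le_toLex] at this
  omega

lemma IsLastMin.unique {L : List Step} {k k' : ℕ} (hk : IsLastMin L k) (hk' : IsLastMin L k') :
    k = k' := by
  have h₁ := hk.2 k' hk'.1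
  have h₂ := hk'.2 k hk.1
  by_contra hne
  rcases Nat.lt_or_gt_of_ne hne with h | h <;> omega

noncomputable def lastMin (L : List Step) : ℕ := (exists_isLastMin L).choose

lemma isLastMin_lastMin (L : List Step) : IsLastMin L (lastMin L) :=
  (exists_isLastMin L).choose_spec

def Raised (W : List Step) : Prop :=
  (W.map dh).sum = 1 ∧ ∀ t, 0 < t → t ≤ W.length → 1 ≤ height W t

lemma raised_cons_up_iff (P : List Step) : Raised (.up :: P) ↔ Nonneg P := by
  simp only [Raised, nonneg_iff, List.map_cons, List.sum_cons, List.length_cons, dh]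
  constructor
  · rintro ⟨hsum, hpos⟩
    refine ⟨by omega, fun t ht => ?_⟩
    have := hpos (t + 1) (by omega) (by omega)
    rw [height_cons_succ, dh] at this
    omega
  · rintro ⟨hsum, hnonneg⟩
    refine ⟨by omega, fun t ht ht' => ?_⟩
    obtain ⟨u, rfl⟩ := Nat.exists_eq_add_one_of_ne_zero ht.ne'
    rw [height_cons_succ, dh]
    have := hnonneg u (by omega)
    omega

lemma Raised.exists_eq_up_cons {W : List Step} (hW : Raised W) : ∃ P, W = .up :: P := by
  match W, hW with
  | [], ⟨hsum, _⟩ => simp at hsum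
  | s :: P, ⟨_, hpos⟩ =>
    have h := hpos 1 one_pos (by simp)
    cases s with
    | up => exact ⟨P, rfl⟩
    | flat _ => simp [height, dh] at h
    | down _ => simp [height, dh] at h

lemma Raised.isLastMin_rotate {W : List Step} (hW : Raised W) {n : ℕ} (hn : 0 < n)
    (hnW : n ≤ W.length) : IsLastMin (W.rotate n) (W.length - n) := by
  obtain ⟨X, Y, rfl, rfl⟩ := exists_eq_append_of_le_length hnW
  obtain ⟨hsum, hpos⟩ := hW
  rw [List.rotate_eq_drop_append_take hnW, List.drop_left' rfl, List.take_left' rfl]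
  simp only [IsLastMin, List.length_append, List.map_append, List.sum_append] at hsum hpos ⊢
  have hYX : height (Y ++ X) Y.length = (Y.map dh).sum := by
    rw [height_append_of_le _ le_rfl, height_length]
  rw [show X.length + Y.length - X.length = Y.length by omega, hYX]
  refine ⟨by omega, fun t ht => ?_⟩
  rcases le_or_gt t Y.length with htY | htY
  · have := hpos (X.length + t) (by omega) (by omega)
    rw [height_append_add] at this
    rw [height_append_of_le _ htY]
    omega
  · obtain ⟨u, rfl⟩ : ∃ u, t = Y.length + u := ⟨t - Y.length, by omega⟩
    have := hpos u (by omega) (by omega)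
    rw [height_append_of_le _ (by omega)] at this
    rw [height_append_add]
    omega

lemma IsLastMin.raised_rotate {L : List Step} (hL : (L.map dh).sum = 1) {k : ℕ}
    (hk : IsLastMin L k) : k < L.length ∧ Raised (L.rotate k) := by
  obtain ⟨hkL, hmin⟩ := hk
  have hk0 := (hmin 0 (Nat.zero_le _)).1
  have hkL' : k < L.length := by
    refine lt_of_le_of_ne hkL fun h => ?_
    rw [h, height_length, hL, height_zero] at hk0
    omega
  obtain ⟨X, Y, rfl, rfl⟩ := exists_eq_append_of_le_length hkL
  refine ⟨hkL', ?_⟩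
  have hXk : height (X ++ Y) X.length = (X.map dh).sum := by
    rw [height_append_of_le _ le_rfl, height_length]
  rw [List.rotate_eq_drop_append_take hkL, List.drop_left' rfl, List.take_left' rfl]
  rw [hXk] at hk0 hmin
  simp only [Raised, List.length_append, List.map_append, List.sum_append] at hL hmin hkL' hk0 ⊢
  refine ⟨by omega, fun t ht ht' => ?_⟩
  rcases le_or_gt t Y.length with htY | htY
  · have := (hmin (X.length + t) (by omega)).2 (by omega)
    rw [height_append_add] at this
    rw [height_append_of_le _ htY]
    omega
  · obtain ⟨u, rfl⟩ : ∃ u, t = Y.length + u := ⟨t - Y.length, by omega⟩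
    have := (hmin u (by omega)).1
    rw [height_append_of_le _ (by omega)] at this
    rw [height_append_add]
    omega

lemma sum_dh_rotate (W : List Step) (k : ℕ) : ((W.rotate k).map dh).sum = (W.map dh).sum :=
  ((W.rotate_perm k).map dh).sum_eq

lemma pathLen_rotate (W : List Step) (k : ℕ) : pathLen (W.rotate k) = pathLen W :=
  ((W.rotate_perm k).map len).sum_eq

lemma pathWt_rotate {R : Type*} [CommRing R] (a b : ℕ → R) (W : List Step) (k : ℕ) :
    pathWt a b (W.rotate k) = pathWt a b W :=
  ((W.rotate_perm k).map (wt a b)).prod_eq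

lemma pathLen_cons_up (P : List Step) : pathLen (.up :: P) = pathLen P + 1 := by
  simp [pathLen, len, add_comm]

lemma getLast?_rotate_succ {α : Type*} {W : List α} (d : α) {i : ℕ} (hi : i < W.length) :
    (W.rotate (i + 1)).getLast? = some (W.getD i d) := by
  rw [List.getLast?_eq_getElem?, List.getElem?_rotate (by simp only [List.length_rotate]; omega),
    List.length_rotate, show W.length - 1 + (i + 1) = i + W.length by omega, Nat.add_mod_right,
    Nat.mod_eq_of_lt hi, List.getElem?_eq_getElem hi, List.getD_eq_getElem _ _ hi]

noncomputable def dyckPart (L : List Step) : List Step := (L.rotate (lastMin L)).tail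

lemma dyckPart_rotate {P : List Step} (hP : Nonneg P) {i : ℕ} (hi : i ≤ P.length) :
    dyckPart ((Step.up :: P).rotate (i + 1)) = P := by
  have hmin := ((raised_cons_up_iff P).2 hP).isLastMin_rotate (Nat.succ_pos i)
    (by simp only [List.length_cons]; omega)
  rw [dyckPart, (isLastMin_lastMin _).unique hmin, List.rotate_rotate,
    Nat.add_sub_cancel' (by simp only [List.length_cons]; omega), List.rotate_length,
    List.tail_cons]

lemma exists_rotate_eq {L : List Step} (hL : (L.map dh).sum = 1) :
    ∃ P, Nonneg P ∧ ∃ i ≤ P.length, L = (Step.up :: P).rotate (i + 1) := by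
  obtain ⟨hk, hraised⟩ := (isLastMin_lastMin L).raised_rotate hL
  obtain ⟨P, hP⟩ := hraised.exists_eq_up_cons
  have hlen : L.length = P.length + 1 := by
    rw [← List.length_rotate L (lastMin L), hP, List.length_cons]
  refine ⟨P, (raised_cons_up_iff P).1 (hP ▸ hraised), L.length - lastMin L - 1, by omega, ?_⟩
  rw [← hP, List.rotate_rotate,
    show lastMin L + (L.length - lastMin L - 1 + 1) = L.length by omega, List.rotate_length]

def pointedPaths (A B : Finset ℕ) (n m : ℕ) : Set (List Step × ℕ) :=
  {p | (∀ s ∈ p.1, Valid A B s) ∧ (p.1.map dh).sum = 1 ∧ pathLen p.1 = n + 1 ∧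
    (∃ s, p.1.getLast? = some s ∧ 1 ≤ len s ∧ p.2 < len s) ∧ npLen p.1 + p.2 = m}

def nonnegPaths (A B : Finset ℕ) (n : ℕ) : Set (List Step) :=
  {L | (∀ s ∈ L, Valid A B s) ∧ Nonneg L ∧ pathLen L = n}

variable {A B : Finset ℕ} {n m : ℕ}

lemma rotate_mem_pointedPaths_iff {P : List Step} (hP : P ∈ nonnegPaths A B n) {i j : ℕ}
    (hi : i ≤ P.length) :
    ((Step.up :: P).rotate (i + 1), j) ∈ pointedPaths A B n m ↔
      j < stepLen (.up :: P) i ∧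
        offset (range (Step.up :: P).length) (rankKey (.up :: P)) (stepLen (.up :: P)) i + j =
          m := by
  obtain ⟨hval, hnn, hlen⟩ := hP
  have hsum := ((raised_cons_up_iff P).2 hnn).1
  have hi' : i < (Step.up :: P).length := by simp only [List.length_cons]; omega
  simp only [pointedPaths, Set.mem_ofPred_eq, List.mem_rotate, sum_dh_rotate, pathLen_rotate,
    getLast?_rotate_succ .up hi', npLen_rotate hsum hi', Option.some.injEq, exists_eq_left',
    stepLen, hsum, pathLen_cons_up, hlen]
  have hvalW : ∀ s ∈ Step.up :: P, Valid A B s := List.forall_mem_cons.2 ⟨trivial, hval⟩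
  exact ⟨fun h => ⟨h.2.2.2.1.2, h.2.2.2.2⟩,
    fun h => ⟨hvalW, trivial, trivial, ⟨by omega, h.1⟩, h.2⟩⟩

lemma exists_of_mem_pointedPaths {p : List Step × ℕ} (hp : p ∈ pointedPaths A B n m) :
    ∃ P ∈ nonnegPaths A B n, ∃ i ≤ P.length, p.1 = (Step.up :: P).rotate (i + 1) := by
  obtain ⟨hval, hsum, hlen, -⟩ := hp
  obtain ⟨P, hP, i, hi, hL⟩ := exists_rotate_eq hsum
  refine ⟨P, ⟨fun s hs => hval s ?_, hP, ?_⟩, i, hi, hL⟩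
  · rw [hL, List.mem_rotate]
    exact List.mem_cons_of_mem _ hs
  · rw [hL, pathLen_rotate, pathLen_cons_up] at hlen
    omega

lemma bijOn_dyckPart (hm : m ≤ n) :
    Set.BijOn (fun p => dyckPart p.1) (pointedPaths A B n m) (nonnegPaths A B n) := by
  refine ⟨fun p hp => ?_, ?_, fun P hP => ?_⟩
  · obtain ⟨P, hP, i, hi, hL⟩ := exists_of_mem_pointedPaths hp
    show dyckPart p.1 ∈ _
    rwa [hL, dyckPart_rotate hP.2.1 hi]
  · rintro ⟨L, j⟩ hp ⟨L', j'⟩ hp' h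
    obtain ⟨P, hP, i, hi, rfl⟩ := exists_of_mem_pointedPaths hp
    obtain ⟨P', hP', i', hi', rfl⟩ := exists_of_mem_pointedPaths hp'
    obtain rfl : P = P' := by
      have h : dyckPart ((Step.up :: P).rotate (i + 1)) =
          dyckPart ((Step.up :: P').rotate (i' + 1)) := h
      rwa [dyckPart_rotate hP.2.1 hi, dyckPart_rotate hP'.2.1 hi'] at h
    rw [rotate_mem_pointedPaths_iff hP hi] at hp
    rw [rotate_mem_pointedPaths_iff hP hi'] at hp'
    have hmem : ∀ {k}, k ≤ P.length → k ∈ range (Step.up :: P).length := fun hk =>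
      mem_range.2 (Nat.lt_succ_of_le hk)
    obtain ⟨rfl, rfl⟩ := Prod.mk.inj <| injOn_offset_add (injOn_rankKey (.up :: P))
      (show (i, j) ∈ {p | _} from ⟨hmem hi, hp.1⟩)
      (show (i', j') ∈ {p | _} from ⟨hmem hi', hp'.1⟩)
      (hp.2.trans hp'.2.symm)
    rfl
  · have hm' : m < ∑ k ∈ range (Step.up :: P).length, stepLen (.up :: P) k := by
      rw [sum_stepLen, pathLen_cons_up, hP.2.2]
      omega
    obtain ⟨⟨i, j⟩, ⟨hi, hj⟩, hij⟩ := surjOn_offset_add (injOn_rankKey (.up :: P)) hm'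
    have hi' : i ≤ P.length := Nat.lt_succ_iff.1 (mem_range.1 hi)
    exact ⟨_, (rotate_mem_pointedPaths_iff hP hi').2 ⟨hj, hij⟩, dyckPart_rotate hP.2.1 hi'⟩

lemma pathWt_dyckPart {R : Type*} [CommRing R] (a b : ℕ → R) {p : List Step × ℕ}
    (hp : p ∈ pointedPaths A B n m) : pathWt a b p.1 = pathWt a b (dyckPart p.1) := by
  obtain ⟨P, hP, i, hi, hL⟩ := exists_of_mem_pointedPaths hp
  rw [hL, dyckPart_rotate hP.2.1 hi, pathWt_rotate]
  simp [pathWt, wt]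

end ChungFeller

theorem class2_chung_feller_dyck_type_general {R : Type*} [CommRing R] (A B : Finset ℕ)
    (a b : ℕ → R)
    (n m : ℕ) (hm : m ≤ n) :
    (∑ᶠ p ∈ {p : List Step × ℕ | (∀ s ∈ p.1, Valid A B s) ∧ (p.1.map dh).sum = 1 ∧
        pathLen p.1 = n + 1 ∧
        (∃ s, p.1.getLast? = some s ∧ 1 ≤ len s ∧ p.2 < len s) ∧
        npLen p.1 + p.2 = m},
      pathWt a b p.1) =
    ∑ᶠ L ∈ {L : List Step | (∀ s ∈ L, Valid A B s) ∧ Nonneg L ∧ pathLen L = n},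
      pathWt a b L :=
  finsum_mem_eq_of_bijOn _ (ChungFeller.bijOn_dyckPart hm) fun _ hp =>
    ChungFeller.pathWt_dyckPart a b hp

/-- Chung-Feller theorem of Dyck type for Class 2 (Theorem 3.4): for `0 ≤ m ≤ n`, the
total weight of pointed paths from `(0,0)` to the line `y = 1` with total length
`n+1`, last step of length `≥ 1`, mark `j` less than the length of the last step, and
non-positive pointed length `\bar l(L) + j = m`, equals the total weight of
nonnegative paths of length `n`. -/
theorem class2_chung_feller_dyck_type {R : Type*} [CommRing R] (A B : Finset ℕ)
    (hA : ∀ i ∈ A, 0 < i) (hB : ∀ i ∈ B, 0 < i) (a b : ℕ → R)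
    (n m : ℕ) (hm : m ≤ n) :
    (∑ᶠ p ∈ {p : List Step × ℕ | (∀ s ∈ p.1, Valid A B s) ∧ (p.1.map dh).sum = 1 ∧
        pathLen p.1 = n + 1 ∧
        (∃ s, p.1.getLast? = some s ∧ 1 ≤ len s ∧ p.2 < len s) ∧
        npLen p.1 + p.2 = m},
      pathWt a b p.1) =
    ∑ᶠ L ∈ {L : List Step | (∀ s ∈ L, Valid A B s) ∧ Nonneg L ∧ pathLen L = n},
      pathWt a b L :=
  class2_chung_feller_dyck_type_general A B a b n m hm
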